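/- In the definition of the order-Henstock integral, allowing all free (McShane) γ_n-fine partitions instead of only Henstock partitions yields the same class of integrable functions and the same integral value, for functions on a compact metric space T with a regular nonatomic σ-additive Borel measure μ. -/

import Mathlib

open MeasureTheory Set Filter

/-- A tagged partition of the set `A`: finitely many pairwise disjoint measurable
sets covering `A`, each with a tag point. -/
structure TaggedPart (T : Type*) [MeasurableSpace T] (A : Set T) where
  k : ℕ
  E : Fin k → Set T
  tag : Fin k → T
  meas : ∀ i, MeasurableSet (E i)
  disj : ∀ i j, i ≠ j → Disjoint (E i) (E j)
  cover : (⋃ i, E i) = A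

namespace TaggedPart

variable {T : Type*} [MeasurableSpace T] {A : Set T}

/-- A Henstock partition: each tag belongs to its set. -/
def IsHenstock (P : TaggedPart T A) : Prop := ∀ i, P.tag i ∈ P.E i

/-- `γ`-fineness: each set is within distance `γ (tag)` of its tag. -/
def IsFine [PseudoMetricSpace T] (γ : T → ℝ) (P : TaggedPart T A) : Prop :=
  ∀ i, ∀ w ∈ P.E i, dist w (P.tag i) < γ (P.tag i)

/-- The Riemann sum `σ(f, P) = ∑ μ(Eᵢ) • f(tᵢ)`. -/
noncomputable def sum {X : Type*} [AddCommMonoid X] [Module ℝ X]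
    (P : TaggedPart T A) (f : T → X) (μ : Measure T) : X :=
  ∑ i, (μ (P.E i)).toReal • f (P.tag i)

end TaggedPart

/-- A gage is a strictly positive function. -/
def IsGage {T : Type*} (γ : T → ℝ) : Prop := ∀ t, 0 < γ t

/-- An (o)-sequence: decreasing with infimum `0`. -/
def IsOSeq {X : Type*} [Lattice X] [AddCommGroup X] (b : ℕ → X) : Prop :=
  Antitone b ∧ IsGLB (Set.range b) 0

section Defs

variable {T : Type*} [MeasurableSpace T] [PseudoMetricSpace T]
  {X : Type*} [NormedAddCommGroup X] [Lattice X] [HasSolidNorm X] [IsOrderedAddMonoid X]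
  [NormedSpace ℝ X]

/-- Order-Henstock integrability of `f` on `A` with integral `J`. -/
def HasOHIntegralOn (f : T → X) (μ : Measure T) (A : Set T) (J : X) : Prop :=
  ∃ b : ℕ → X, IsOSeq b ∧ ∃ γ : ℕ → T → ℝ, (∀ n, IsGage (γ n)) ∧
    ∀ n (P : TaggedPart T A), P.IsHenstock → P.IsFine (γ n) →
      |P.sum f μ - J| ≤ b n

/-- Order-McShane (free partition) integrability of `f` on `A` with integral `J`. -/
def HasOMIntegralOn (f : T → X) (μ : Measure T) (A : Set T) (J : X) : Prop :=
  ∃ b : ℕ → X, IsOSeq b ∧ ∃ γ : ℕ → T → ℝ, (∀ n, IsGage (γ n)) ∧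
    ∀ n (P : TaggedPart T A), P.IsFine (γ n) → |P.sum f μ - J| ≤ b n

/-- Order-McShane integrability with a prescribed regulating (o)-sequence `b`. -/
def HasOMIntegralOnWith (f : T → X) (μ : Measure T) (A : Set T) (J : X)
    (b : ℕ → X) : Prop :=
  ∃ γ : ℕ → T → ℝ, (∀ n, IsGage (γ n)) ∧
    ∀ n (P : TaggedPart T A), P.IsFine (γ n) → |P.sum f μ - J| ≤ b n

/-- Norm-Henstock integrability of `f` on `A` with integral `J`. -/
def HasNormHIntegralOn (f : T → X) (μ : Measure T) (A : Set T) (J : X) : Prop :=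
  ∀ ε : ℝ, 0 < ε → ∃ γ : T → ℝ, IsGage γ ∧
    ∀ P : TaggedPart T A, P.IsHenstock → P.IsFine γ → ‖P.sum f μ - J‖ ≤ ε

/-- Norm-McShane (free partition) integrability of `f` on `A` with integral `J`. -/
def HasNormMIntegralOn (f : T → X) (μ : Measure T) (A : Set T) (J : X) : Prop :=
  ∀ ε : ℝ, 0 < ε → ∃ γ : T → ℝ, IsGage γ ∧
    ∀ P : TaggedPart T A, P.IsFine γ → ‖P.sum f μ - J‖ ≤ ε

end Defs

/-! A free `γ`-fine partition can be turned into a Henstock `γ`-fine partition with the same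
Riemann sum: merge the cells sharing a tag, remove the finitely many tags from every cell, and
put each tag back into its own cell. The new cells stay `γ`-fine because a tag is at distance `0`
from itself, and since points are `μ`-null each new cell has the measure of the union of the old
cells it replaces. So the bounds on Henstock partitions already hold for all free partitions. -/

namespace TaggedPart

variable {T : Type*} [MeasurableSpace T] {A : Set T}

theorem E_subset (P : TaggedPart T A) (i : Fin P.k) : P.E i ⊆ A :=
  (subset_iUnion P.E i).trans P.cover.subset

noncomputable def ofFinset {α : Type*} (s : Finset α) (E : α → Set T) (tag : α → T)
    (meas : ∀ a, MeasurableSet (E a)) (disj : (s : Set α).PairwiseDisjoint E)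
    (cover : ⋃ a ∈ s, E a = A) : TaggedPart T A where
  k := s.card
  E r := E (s.equivFin.symm r)
  tag r := tag (s.equivFin.symm r)
  meas r := meas _
  disj r r' h := disj (s.equivFin.symm r).2 (s.equivFin.symm r').2
    (Subtype.val_injective.ne (s.equivFin.symm.injective.ne h))
  cover := by
    rw [← cover, s.equivFin.symm.surjective.iUnion_comp (fun a : s => E a), Set.iUnion_subtype]

section ofFinset

variable {α : Type*} {s : Finset α} {E : α → Set T} {tag : α → T}
  {meas : ∀ a, MeasurableSet (E a)} {disj : (s : Set α).PairwiseDisjoint E}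
  {cover : ⋃ a ∈ s, E a = A}

theorem isHenstock_ofFinset (h : ∀ a ∈ s, tag a ∈ E a) :
    (ofFinset s E tag meas disj cover).IsHenstock :=
  fun r => h _ (s.equivFin.symm r).2

theorem isFine_ofFinset [PseudoMetricSpace T] {γ : T → ℝ}
    (h : ∀ a ∈ s, ∀ w ∈ E a, dist w (tag a) < γ (tag a)) :
    (ofFinset s E tag meas disj cover).IsFine γ :=
  fun r => h _ (s.equivFin.symm r).2

theorem sum_ofFinset {X : Type*} [AddCommMonoid X] [Module ℝ X] (f : T → X) (μ : Measure T) :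
    (ofFinset s E tag meas disj cover).sum f μ = ∑ a ∈ s, (μ (E a)).toReal • f (tag a) := by
  rw [← Finset.sum_coe_sort s]
  exact s.equivFin.symm.sum_comp (fun a : s => (μ (E a)).toReal • f (tag a))

end ofFinset

section toHenstock

open scoped Classical

variable (P : TaggedPart T A)

def henstockCell (t : T) : Set T :=
  insert t ((⋃ i ∈ Finset.univ.filter (P.tag · = t), P.E i) \ range P.tag)

theorem pairwiseDisjoint_henstockCell :
    (range P.tag).PairwiseDisjoint P.henstockCell := by
  rintro _ ⟨i, rfl⟩ _ ⟨i', rfl⟩ hne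
  refine Set.disjoint_left.2 ?_
  rintro x (rfl | ⟨hx, hxR⟩) (hx' | ⟨hx', hxR'⟩)
  · exact hne hx'
  · exact hxR' ⟨i, rfl⟩
  · exact hxR ⟨i', hx'.symm⟩
  · obtain ⟨j, hj, hxj⟩ := mem_iUnion₂.1 hx
    obtain ⟨j', hj', hxj'⟩ := mem_iUnion₂.1 hx'
    have hjj' : j ≠ j' := by
      rintro rfl
      exact hne ((Finset.mem_filter.1 hj).2.symm.trans (Finset.mem_filter.1 hj').2)
    exact P.disj j j' hjj' |>.le_bot ⟨hxj, hxj'⟩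

theorem biUnion_henstockCell (hA : range P.tag ⊆ A) :
    ⋃ t ∈ Finset.univ.image P.tag, P.henstockCell t = A := by
  refine Subset.antisymm (iUnion₂_subset fun t ht => ?_) fun x hx => ?_
  · obtain ⟨i, -, rfl⟩ := Finset.mem_image.1 ht
    exact insert_subset (hA ⟨i, rfl⟩)
      (sdiff_subset.trans (iUnion₂_subset fun j _ => P.E_subset j))
  by_cases hxR : x ∈ range P.tag
  · obtain ⟨i, rfl⟩ := hxR
    exact mem_iUnion₂.2 ⟨_, Finset.mem_image_of_mem _ (Finset.mem_univ i), mem_insert _ _⟩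
  · obtain ⟨j, hj⟩ := mem_iUnion.1 (P.cover ▸ hx)
    exact mem_iUnion₂.2 ⟨_, Finset.mem_image_of_mem _ (Finset.mem_univ j),
      Or.inr ⟨mem_iUnion₂.2 ⟨j, by simp, hj⟩, hxR⟩⟩

theorem measure_henstockCell (μ : Measure T) [NullSingletonClass μ] (t : T) :
    μ (P.henstockCell t) = ∑ i ∈ Finset.univ.filter (P.tag · = t), μ (P.E i) := by
  rw [henstockCell, measure_congr (insert_ae_eq_self t _),
    measure_sdiff_null ((finite_range P.tag).measure_zero μ)]
  exact measure_biUnion_finset (fun j _ j' _ h => P.disj j j' h) fun j _ => P.meas j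

variable [MeasurableSingletonClass T]

theorem measurableSet_henstockCell (t : T) : MeasurableSet (P.henstockCell t) :=
  ((Finset.measurableSet_biUnion _ fun i _ => P.meas i).diff
    (finite_range P.tag).measurableSet).insert t

noncomputable def toHenstock (hA : range P.tag ⊆ A) : TaggedPart T A :=
  ofFinset (Finset.univ.image P.tag) P.henstockCell id P.measurableSet_henstockCell
    (by simpa using P.pairwiseDisjoint_henstockCell) (P.biUnion_henstockCell hA)

theorem isHenstock_toHenstock (hA : range P.tag ⊆ A) : (P.toHenstock hA).IsHenstock :=
  isHenstock_ofFinset fun t _ => mem_insert t _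

theorem isFine_toHenstock [PseudoMetricSpace T] {γ : T → ℝ} (hγ : IsGage γ)
    (hP : P.IsFine γ) (hA : range P.tag ⊆ A) : (P.toHenstock hA).IsFine γ := by
  refine isFine_ofFinset fun t _ w hw => ?_
  rcases hw with rfl | ⟨hw, -⟩
  · simpa using hγ w
  · obtain ⟨i, hi, hwi⟩ := mem_iUnion₂.1 hw
    simpa [← (Finset.mem_filter.1 hi).2] using hP i w hwi

theorem sum_toHenstock {X : Type*} [AddCommMonoid X] [Module ℝ X] (f : T → X) (μ : Measure T)
    [IsFiniteMeasure μ] [NullSingletonClass μ] (hA : range P.tag ⊆ A) :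
    (P.toHenstock hA).sum f μ = P.sum f μ := by
  rw [toHenstock, sum_ofFinset, TaggedPart.sum]
  refine Finset.sum_image' _ fun i _ => ?_
  rw [id, measure_henstockCell, ENNReal.toReal_sum fun j _ => measure_ne_top μ _, Finset.sum_smul]
  exact Finset.sum_congr rfl fun j hj => by rw [(Finset.mem_filter.1 hj).2]

end toHenstock

end TaggedPart

section Integral

variable {T : Type*} [MeasurableSpace T] [PseudoMetricSpace T]
  {X : Type*} [NormedAddCommGroup X] [Lattice X]
  [NormedSpace ℝ X] {f : T → X} {μ : Measure T} {A : Set T} {J : X}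

theorem HasOMIntegralOn.hasOHIntegralOn (h : HasOMIntegralOn f μ A J) :
    HasOHIntegralOn f μ A J :=
  let ⟨b, hb, γ, hγ, H⟩ := h
  ⟨b, hb, γ, hγ, fun n P _ => H n P⟩

theorem HasOHIntegralOn.hasOMIntegralOn_univ [MeasurableSingletonClass T] [IsFiniteMeasure μ]
    [NullSingletonClass μ] (h : HasOHIntegralOn f μ univ J) : HasOMIntegralOn f μ univ J := by
  obtain ⟨b, hb, γ, hγ, H⟩ := h
  refine ⟨b, hb, γ, hγ, fun n P hP => ?_⟩
  have hA : range P.tag ⊆ univ := subset_univ _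
  rw [← P.sum_toHenstock f μ hA]
  exact H n _ (P.isHenstock_toHenstock hA) (P.isFine_toHenstock (hγ n) hP hA)

end Integral

theorem oH_free_iff_henstock_general {T : Type*} [MetricSpace T] [MeasurableSpace T] [BorelSpace T]
    (μ : Measure T) [IsFiniteMeasure μ]
    {X : Type*} [NormedAddCommGroup X] [Lattice X]
    [NormedSpace ℝ X] [NullSingletonClass μ] (f : T → X) (J : X) :
    HasOMIntegralOn f μ Set.univ J ↔ HasOHIntegralOn f μ Set.univ J :=
  ⟨HasOMIntegralOn.hasOHIntegralOn, HasOHIntegralOn.hasOMIntegralOn_univ⟩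

theorem oH_free_iff_henstock {T : Type*} [MetricSpace T] [CompactSpace T] [MeasurableSpace T] [BorelSpace T]
    (μ : Measure T) [IsFiniteMeasure μ] [μ.Regular]
    {X : Type*} [NormedAddCommGroup X] [Lattice X] [HasSolidNorm X] [IsOrderedAddMonoid X]
    [NormedSpace ℝ X] [CompleteSpace X] [NullSingletonClass μ]
    (hDC : ∀ s : Set X, s.Nonempty → BddAbove s → ∃ x, IsLUB s x) (f : T → X) (J : X) :
    HasOMIntegralOn f μ Set.univ J ↔ HasOHIntegralOn f μ Set.univ J :=
  oH_free_iff_henstock_general μ f J
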